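/- Converse diagonal criterion: let a,b,c,e ∈ ℍ with a ≠ c, and suppose b and e lie on different sides of the hyperbolic line through a and c, i.e. [a,c,b]·[a,c,e] < 0. If S_ac² · (S_ab·S_bc + S_ae·S_ce) = (S_ab·S_ce + S_ae·S_bc)·(S_ab·S_ae + S_bc·S_ce), then the four points a,b,c,e are cocyclic. -/
import Mathlib


open Real Finset

set_option maxHeartbeats 1000000

noncomputable section

/-- Points of `ℝ³`. -/
abbrev V3 : Type := Fin 3 → ℝ

/-- The pseudo-Euclidean scalar product `⟨x,y⟩ = x₀y₀ − x₁y₁ − x₂y₂`. -/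
def pscal (x y : V3) : ℝ := x 0 * y 0 - x 1 * y 1 - x 2 * y 2

/-- The hyperboloid model `ℍ` of the hyperbolic plane. -/
def Hyp : Set V3 := {x | pscal x x = 1 ∧ 0 < x 0}

/-- Inverse hyperbolic cosine. -/
def arcoshR (x : ℝ) : ℝ := Real.log (x + Real.sqrt (x ^ 2 - 1))

/-- Hyperbolic distance `d(a,b) = arcosh ⟨a,b⟩`. -/
def dH (a b : V3) : ℝ := arcoshR (pscal a b)

/-- Determinant of the 3×3 matrix with columns `a`, `b`, `c`. -/
def det3 (a b c : V3) : ℝ :=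
  a 0 * (b 1 * c 2 - b 2 * c 1) - b 0 * (a 1 * c 2 - a 2 * c 1) + c 0 * (a 1 * b 2 - a 2 * b 1)

/-- `S_ab = sinh(d(a,b)/2)`. -/
def SS (a b : V3) : ℝ := Real.sinh (dH a b / 2)

/-- Signed area of the triangle `a b c`. -/
def triArea (a b c : V3) : ℝ :=
  2 * Real.arctan (det3 a b c / (pscal a b + pscal b c + pscal c a + 1))

/-- Signed area of the `n`-gon with vertices `z 1, …, z n`. -/
def polyArea (n : ℕ) (z : ℕ → V3) : ℝ :=
  ∑ k ∈ Finset.Ico 2 n, triArea (z 1) (z k) (z (k + 1))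

/-- Cyclic successor on `{1, …, n}`. -/
def nxt (n k : ℕ) : ℕ := k % n + 1

/-- Oriented convexity of the `n`-gon `z 1, …, z n`. -/
def OrientedConvex (n : ℕ) (z : ℕ → V3) : Prop :=
  ∀ k ∈ Finset.Icc 1 n, ∀ j ∈ Finset.Icc 1 n,
    j ≠ k → j ≠ nxt n k → 0 < det3 (z k) (z (nxt n k)) (z j)

/-- A set of points lies in a common 2-dimensional linear subspace of `ℝ³`. -/
def Collin (s : Set V3) : Prop :=
  ∃ W : Submodule ℝ V3, Module.finrank ℝ W = 2 ∧ ∀ x ∈ s, x ∈ W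

/-- A set of points lies in a common affine plane of `ℝ³` not containing the origin. -/
def Cocyc (s : Set V3) : Prop :=
  ∃ u : V3, ∃ p : ℝ, u ≠ 0 ∧ p ≠ 0 ∧ ∀ x ∈ s, pscal u x = p


lemma pscal_comm (x y : V3) : pscal x y = pscal y x := by unfold pscal; ring

lemma pscal_ge_one {p q : V3} (hp : p ∈ Hyp) (hq : q ∈ Hyp) : 1 ≤ pscal p q := by
  obtain ⟨hp1, hp0⟩ := hp
  obtain ⟨hq1, hq0⟩ := hq
  unfold pscal at *
  nlinarith [sq_nonneg (p 1 - q 1), sq_nonneg (p 2 - q 2), sq_nonneg (p 1 * q 2 - p 2 * q 1),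
    mul_pos hp0 hq0, sq_nonneg (p 1 + q 1), sq_nonneg (p 2 + q 2)]

lemma cosh_arcoshR {t : ℝ} (ht : 1 ≤ t) : Real.cosh (arcoshR t) = t := by
  have h1 : (0:ℝ) ≤ t ^ 2 - 1 := by nlinarith
  have hs : Real.sqrt (t ^ 2 - 1) ^ 2 = t ^ 2 - 1 := Real.sq_sqrt h1
  have hsn : 0 ≤ Real.sqrt (t ^ 2 - 1) := Real.sqrt_nonneg _
  have hx : 0 < t + Real.sqrt (t ^ 2 - 1) := by nlinarith
  unfold arcoshR
  rw [Real.cosh_log hx]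
  have hinv : (t + Real.sqrt (t ^ 2 - 1))⁻¹ = t - Real.sqrt (t ^ 2 - 1) := by
    apply inv_eq_of_mul_eq_one_right
    nlinarith
  rw [hinv]; ring

lemma arcoshR_nonneg {t : ℝ} (ht : 1 ≤ t) : 0 ≤ arcoshR t :=
  Real.log_nonneg (by nlinarith [Real.sqrt_nonneg (t ^ 2 - 1)])

lemma SS_nonneg {p q : V3} (hp : p ∈ Hyp) (hq : q ∈ Hyp) : 0 ≤ SS p q := by
  unfold SS
  rw [Real.sinh_nonneg_iff]
  have := arcoshR_nonneg (pscal_ge_one hp hq)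
  unfold dH
  linarith

lemma pscal_SS {p q : V3} (hp : p ∈ Hyp) (hq : q ∈ Hyp) : pscal p q = 1 + 2 * SS p q ^ 2 := by
  have h1 := pscal_ge_one hp hq
  have h2 : Real.cosh (dH p q) = pscal p q := cosh_arcoshR h1
  unfold SS
  rw [← h2]
  have h3 : dH p q = 2 * (dH p q / 2) := by ring
  rw [h3, Real.cosh_two_mul, Real.cosh_sq]
  ring

lemma gram3_sq (p q r : V3) : det3 p q r ^ 2 =
    pscal p p * pscal q q * pscal r r - pscal p p * pscal q r ^ 2 - pscal q q * pscal p r ^ 2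
      - pscal r r * pscal p q ^ 2 + 2 * pscal p q * pscal p r * pscal q r := by
  simp only [det3, pscal]; ring

lemma gram_mixed (p q r s : V3) : det3 p q r * det3 p q s =
    pscal p p * (pscal q q * pscal r s - pscal q s * pscal q r)
      - pscal p q * (pscal p q * pscal r s - pscal q s * pscal p r)
      + pscal p s * (pscal p q * pscal q r - pscal q q * pscal p r) := by
  simp only [det3, pscal]; ring

lemma det4_gram (a b c e : V3) :
    (pscal a a) * (pscal b b) * (pscal c c) * (pscal e e) - (pscal a a) * (pscal b b) * (pscal c e) * (pscal c e) - (pscal a a) * (pscal b c) * (pscal b c) * (pscal e e) + (pscal a a) * (pscal b c) * (pscal c e) * (pscal b e) + (pscal a a) * (pscal b e) * (pscal b c) * (pscal c e) - (pscal a a) * (pscal b e) * (pscal c c) * (pscal b e) - (pscal a b) * (pscal a b) * (pscal c c) * (pscal e e) + (pscal a b) * (pscal a b) * (pscal c e) * (pscal c e) + (pscal a b) * (pscal b c) * (pscal a c) * (pscal e e) - (pscal a b) * (pscal b c) * (pscal c e) * (pscal a e) - (pscal a b) * (pscal b e) * (pscal a c) * (pscal c e) + (pscal a b) * (pscal b e)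 * (pscal c c) * (pscal a e) + (pscal a c) * (pscal a b) * (pscal b c) * (pscal e e) - (pscal a c) * (pscal a b) * (pscal c e) * (pscal b e) - (pscal a c) * (pscal b b) * (pscal a c) * (pscal e e) + (pscal a c) * (pscal b b) * (pscal c e) * (pscal a e) + (pscal a c) * (pscal b e) * (pscal a c) * (pscal b e) - (pscal a c) * (pscal b e) * (pscal b c) * (pscal a e) - (pscal a e) * (pscal a b) * (pscal b c) * (pscal c e) + (pscal a e) * (pscal a b) * (pscal c c) * (pscal b e) + (pscal a e) * (pscal b b) * (pscal a c) * (pscal c e) - (pscal a e) * (pscal b b) * (pscal c c) * (pscal a e) - (pscal a e) * (pscal b c) * (pscal a c) * (pscal b e) + (pscal a e) * (pscal b c) * (pscal b c) * (pscal a e) = 0 := by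
  simp only [pscal]; ring

lemma det4_sq (a b c e : V3) :
    (det3 b c e - det3 a c e + det3 a b e - det3 a b c) ^ 2 =
    (1 + pscal a a) * (1 + pscal b b) * (1 + pscal c c) * (1 + pscal e e) - (1 + pscal a a) * (1 + pscal b b) * (1 + pscal c e) * (1 + pscal c e) - (1 + pscal a a) * (1 + pscal b c) * (1 + pscal b c) * (1 + pscal e e) + (1 + pscal a a) * (1 + pscal b c) * (1 + pscal c e) * (1 + pscal b e) + (1 + pscal a a) * (1 + pscal b e) * (1 + pscal b c) * (1 + pscal c e) - (1 + pscal a a) * (1 + pscal b e) * (1 + pscal c c) * (1 + pscal b e) - (1 + pscal a b) * (1 + pscal a b) * (1 + pscal c c) * (1 + pscal e e) + (1 + pscal a b) * (1 + pscal a b) * (1 + pscal c e) * (1 + pscal c e) + (1 + pscal a b) * (1 + pscal b c) * (1 + pscal a c) * (1 + pscal e e) - (1 + pscal a b) * (1 + pscal b c) * (1 + pscal c e) * (1 + pscal a e) - (1 + pscal a b) * (1 + pscal b e) * (1 + pscal a c) * (1 + pscal c e) + (1 + pscal a b) * (1 + pscal b e) * (1 + pscal c c) * (1 + pscal a e) +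 (1 + pscal a c) * (1 + pscal a b) * (1 + pscal b c) * (1 + pscal e e) - (1 + pscal a c) * (1 + pscal a b) * (1 + pscal c e) * (1 + pscal b e) - (1 + pscal a c) * (1 + pscal b b) * (1 + pscal a c) * (1 + pscal e e) + (1 + pscal a c) * (1 + pscal b b) * (1 + pscal c e) * (1 + pscal a e) + (1 + pscal a c) * (1 + pscal b e) * (1 + pscal a c) * (1 + pscal b e) - (1 + pscal a c) * (1 + pscal b e) * (1 + pscal b c) * (1 + pscal a e) - (1 + pscal a e) * (1 + pscal a b) * (1 + pscal b c) * (1 + pscal c e) + (1 + pscal a e) * (1 + pscal a b) * (1 + pscal c c) * (1 + pscal b e) + (1 + pscal a e) * (1 + pscal b b) * (1 + pscal a c) * (1 + pscal c e) - (1 + pscal a e) * (1 + pscal b b) * (1 + pscal c c) * (1 + pscal a e) - (1 + pscal a e) * (1 + pscal b c) * (1 + pscal a c) * (1 + pscal b e) + (1 + pscal a e) * (1 + pscal b c) * (1 + pscal b c) * (1 + pscal a e) := by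
  simp only [det3, pscal]; ring

lemma pscal_m (a b c : V3) : ∀ x : V3,
    pscal ![(b 1 * c 2 - b 2 * c 1) - (a 1 * c 2 - a 2 * c 1) + (a 1 * b 2 - a 2 * b 1),
            -((-(b 0 * c 2) + c 0 * b 2) + (a 0 * c 2 - c 0 * a 2) + (-(a 0 * b 2) + b 0 * a 2)),
            -((b 0 * c 1 - c 0 * b 1) + (-(a 0 * c 1) + c 0 * a 1) + (a 0 * b 1 - b 0 * a 1))] x
      = det3 x b c + det3 a x c + det3 a b x := by
  intro x
  simp only [pscal, det3, Matrix.cons_val_zero, Matrix.cons_val_one, Matrix.head_cons,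
    Matrix.cons_val_two, Matrix.tail_cons]
  ring


lemma endgame {u v w x y Db De : ℝ} (hu0 : 0 ≤ u) (hv0 : 0 ≤ v) (hx0 : 0 ≤ x) (hy0 : 0 ≤ y)
    (HDb : Db ^ 2 = 16*u^2*v^2*(1+w^2) - (2*(w^2-u^2-v^2))^2)
    (HDe : De ^ 2 = 16*x^2*y^2*(1+w^2) - (2*(w^2-x^2-y^2))^2)
    (hside : Db * De < 0)
    (heq : w ^ 2 * (u * v + x * y) = (u * y + x * v) * (u * x + v * y)) :
    (2*(w^2-u^2-v^2)) * De - (2*(w^2-x^2-y^2)) * Db = 0 := by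
  have hDb0 : Db ≠ 0 := by
    intro h; rw [h, zero_mul] at hside; exact lt_irrefl 0 hside
  have hDe0 : De ≠ 0 := by
    intro h; rw [h, mul_zero] at hside; exact lt_irrefl 0 hside
  have hDbsq : 0 < Db ^ 2 := pow_two_pos_of_ne_zero hDb0
  have hDesq : 0 < De ^ 2 := pow_two_pos_of_ne_zero hDe0
  have hune : u ≠ 0 := by
    intro h0
    rw [h0] at HDb
    nlinarith [hDbsq, sq_nonneg (w^2 - v^2)]
  have hvne : v ≠ 0 := by
    intro h0
    rw [h0] at HDb
    nlinarith [hDbsq, sq_nonneg (w^2 - u^2)]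
  have hxne : x ≠ 0 := by
    intro h0
    rw [h0] at HDe
    nlinarith [hDesq, sq_nonneg (w^2 - y^2)]
  have hyne : y ≠ 0 := by
    intro h0
    rw [h0] at HDe
    nlinarith [hDesq, sq_nonneg (w^2 - x^2)]
  have hu : 0 < u := lt_of_le_of_ne hu0 (Ne.symm hune)
  have hv : 0 < v := lt_of_le_of_ne hv0 (Ne.symm hvne)
  have hx : 0 < x := lt_of_le_of_ne hx0 (Ne.symm hxne)
  have hy : 0 < y := lt_of_le_of_ne hy0 (Ne.symm hyne)
  have hg : 0 < u * v := mul_pos hu hv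
  have hh : 0 < x * y := mul_pos hx hy
  have hstar : (u*v) * (2*(w^2 - x^2 - y^2)) = -((x*y) * (2*(w^2 - u^2 - v^2))) := by
    linear_combination 2 * heq
  have hsq : ((2*(w^2-u^2-v^2)) * De)^2 = ((2*(w^2-x^2-y^2)) * Db)^2 := by
    linear_combination (2*(w^2-u^2-v^2))^2 * HDe - (2*(w^2-x^2-y^2))^2 * HDb
      + 16*(1+w^2)*((2*(w^2-u^2-v^2))*(x*y) - (2*(w^2-x^2-y^2))*(u*v)) * hstar
  have hQQ : (2*(w^2-u^2-v^2)) * (2*(w^2-x^2-y^2)) ≤ 0 := by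
    have h' : (u*v) * ((2*(w^2-u^2-v^2)) * (2*(w^2-x^2-y^2)))
        = -((x*y) * (2*(w^2-u^2-v^2))^2) := by
      linear_combination (2*(w^2-u^2-v^2)) * hstar
    nlinarith [hg, mul_nonneg hh.le (sq_nonneg (2*(w^2-u^2-v^2)))]
  have h2 : 0 ≤ (2*(w^2-u^2-v^2)) * (2*(w^2-x^2-y^2)) * (Db * De) := by
    nlinarith [hQQ, hside]
  have hfac : ((2*(w^2-u^2-v^2)) * De - (2*(w^2-x^2-y^2)) * Db)
      * ((2*(w^2-u^2-v^2)) * De + (2*(w^2-x^2-y^2)) * Db) = 0 := by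
    linear_combination hsq
  rcases mul_eq_zero.1 hfac with h | h
  · exact h
  · have h5 : ((2*(w^2-x^2-y^2)) * Db)^2
        = -((2*(w^2-u^2-v^2)) * (2*(w^2-x^2-y^2)) * (Db * De)) := by
      linear_combination ((2*(w^2-x^2-y^2)) * Db) * h
    have h6 : ((2*(w^2-x^2-y^2)) * Db)^2 = 0 := le_antisymm (by linarith) (sq_nonneg _)
    have h7 : (2*(w^2-x^2-y^2)) * Db = 0 :=
      pow_eq_zero_iff (by norm_num : (2:ℕ) ≠ 0) |>.1 h6
    linear_combination h - 2 * h7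

/-- Theorem 3.8 (converse diagonal criterion): if `b` and `e` lie on different sides of
the line through `a ≠ c` and the diagonal relation holds, then `a, b, c, e` are
cocyclic. -/
theorem diagonal_criterion_cocyclic (a b c e : V3)
    (ha : a ∈ Hyp) (hb : b ∈ Hyp) (hc : c ∈ Hyp) (he : e ∈ Hyp)
    (hac : a ≠ c) (hside : det3 a c b * det3 a c e < 0)
    (heq : SS a c ^ 2 * (SS a b * SS b c + SS a e * SS c e) =
      (SS a b * SS c e + SS a e * SS b c) * (SS a b * SS a e + SS b c * SS c e)) :
    Cocyc {a, b, c, e} := by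
  have hA : pscal a b = 1 + 2 * SS a b ^ 2 := pscal_SS ha hb
  have hB : pscal b c = 1 + 2 * SS b c ^ 2 := pscal_SS hb hc
  have hC : pscal a c = 1 + 2 * SS a c ^ 2 := pscal_SS ha hc
  have hX : pscal a e = 1 + 2 * SS a e ^ 2 := pscal_SS ha he
  have hY : pscal c e = 1 + 2 * SS c e ^ 2 := pscal_SS hc he
  have hu0 : 0 ≤ SS a b := SS_nonneg ha hb
  have hv0 : 0 ≤ SS b c := SS_nonneg hb hc
  have hx0 : 0 ≤ SS a e := SS_nonneg ha he
  have hy0 : 0 ≤ SS c e := SS_nonneg hc he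
  obtain ⟨ha1, ha0⟩ := ha
  obtain ⟨hb1, hb0⟩ := hb
  obtain ⟨hc1, hc0⟩ := hc
  obtain ⟨he1, he0⟩ := he
  have HDb := gram3_sq a c b
  rw [pscal_comm c b] at HDb
  rw [ha1, hc1, hb1, hA, hB, hC] at HDb
  have HDe := gram3_sq a c e
  rw [ha1, hc1, he1, hC, hX, hY] at HDe
  have HP := gram_mixed a c b e
  rw [pscal_comm c b] at HP
  rw [ha1, hc1, hA, hB, hC, hX, hY] at HP
  have HG := det4_gram a b c e
  rw [ha1, hb1, hc1, he1, hA, hB, hC, hX, hY] at HG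
  have HT := det4_sq a b c e
  rw [ha1, hb1, hc1, he1, hA, hB, hC, hX, hY] at HT
  set u := SS a b with hudef
  set v := SS b c with hvdef
  set w := SS a c with hwdef
  set x := SS a e with hxdef
  set y := SS c e with hydef
  set z := pscal b e with hzdef
  have HDb' : det3 a c b ^ 2 = 16*u^2*v^2*(1+w^2) - (2*(w^2-u^2-v^2))^2 := by
    linear_combination HDb
  have HDe' : det3 a c e ^ 2 = 16*x^2*y^2*(1+w^2) - (2*(w^2-x^2-y^2))^2 := by
    linear_combination HDe
  have key : ((2+2*w^2) * (det3 b c e - det3 a c e + det3 a b e - det3 a b c))^2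
      = ((2*(w^2-u^2-v^2)) * det3 a c e - (2*(w^2-x^2-y^2)) * det3 a c b)^2 := by
    linear_combination (2+2*w^2)^2 * HT - (2*(w^2-u^2-v^2))^2 * HDe
      - (2*(w^2-x^2-y^2))^2 * HDb + 2*(2*(w^2-u^2-v^2))*(2*(w^2-x^2-y^2)) * HP
      + (2+2*w^2)*(4+2*w^2) * HG
  clear HT HG HP HDb HDe
  have hdiff : (2*(w^2-u^2-v^2)) * det3 a c e - (2*(w^2-x^2-y^2)) * det3 a c b = 0 :=
    endgame hu0 hv0 hx0 hy0 HDb' HDe' hside heq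
  have hDb0 : det3 a c b ≠ 0 := by
    intro h; rw [h, zero_mul] at hside; exact lt_irrefl 0 hside
  have hDD : det3 b c e - det3 a c e + det3 a b e - det3 a b c = 0 := by
    have h7 : ((2+2*w^2) * (det3 b c e - det3 a c e + det3 a b e - det3 a b c))^2 = 0 := by
      rw [key, hdiff]; norm_num
    have h8 := pow_eq_zero_iff (by norm_num : (2:ℕ) ≠ 0) |>.1 h7
    have h9 : (0:ℝ) < 2+2*w^2 := by positivity
    rcases mul_eq_zero.1 h8 with h | h
    · exact absurd h (ne_of_gt h9)
    · exact h
  have hd : det3 a b c ≠ 0 := by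
    have hne : det3 a b c = -det3 a c b := by simp only [det3]; ring
    rw [hne]
    exact neg_ne_zero.2 hDb0
  obtain ⟨m, hm⟩ : ∃ m : V3, ∀ p : V3, pscal m p = det3 p b c + det3 a p c + det3 a b p :=
    ⟨_, pscal_m a b c⟩
  refine ⟨m, det3 a b c, ?_, hd, ?_⟩
  · intro h0
    apply hd
    have hma := hm a
    rw [h0] at hma
    have hz0 : pscal (0:V3) a = 0 := by simp [pscal]
    rw [hz0] at hma
    have hsum : det3 a b c + det3 a a c + det3 a b a = det3 a b c := by
      simp only [det3]; ring
    rw [hsum] at hma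
    exact hma.symm
  · intro p hp
    simp only [Set.mem_insert_iff, Set.mem_singleton_iff] at hp
    rcases hp with rfl | rfl | rfl | rfl
    · rw [hm p]
      simp only [det3]; ring
    · rw [hm p]
      simp only [det3]; ring
    · rw [hm p]
      simp only [det3]; ring
    · rw [hm p]
      have h := hDD
      simp only [det3] at h ⊢
      linear_combination h
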